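/- Let U be a finite set, (A, p_A) an ensemble of functions from U satisfying the weak hash inequality with parameters (α, β). Let μ be a probability distribution on U × Y (Y finite), and for each y let g_A(·|y) pick a maximizer of μ_{X|Y}(·|y) over the coset C_A(c) for the decoding rule x_A(c|y) = argmax_{x'∈C_A(c)} μ_{X|Y}(x'|y). Fix ε > 0 and let T̄ = {(x,y) : (1/n)log(1/μ_{X|Y}(x|y)) ≤ H + ε}. Then E_A[ ∑_{x,y} μ(x,y)·1[x_A(Ax|y) ≠ x] ] ≤ 2^{−n(r − H − ε)}·α + β + μ(T̄^c), where r = (1/n)·log|ImA|. -/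

import Mathlib

open Finset
open scoped Classical

/-!
For a fixed typical pair `(x, y)`, a decoding error under `A` means that the maximum-likelihood
decoder returns some `x' ≠ x` with `A x' = A x` that is at least as likely as `x`, hence again
typical. So the probability of error is at most the expected number of collisions of `x` with
the other members of the slice `T̄(y)`, which the weak hash inequality (for `{x}` and that slice)
bounds by `|T̄(y)| α / |Im A| + β`. Typical conditional probabilities are at least
`2^{-n(H+ε)}`, so `|T̄(y)| ≤ 2^{n(H+ε)}`. Averaging over `μ` and charging every atypical pair
with probability `1` gives the bound.
-/

def WeakHashIneq {U V : Type*} [DecidableEq U] [DecidableEq V]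
    (𝒜 : Finset (U → V)) (p : (U → V) → ℝ) (α β M : ℝ) : Prop :=
  ∀ T T' : Finset U,
    ∑ u ∈ T, ∑ u' ∈ T', ∑ A ∈ 𝒜.filter (fun A => A u = A u'), p A ≤
      ((T ∩ T').card : ℝ) + (T.card : ℝ) * (T'.card : ℝ) * α / M
        + ((min T.card T'.card : ℕ) : ℝ) * β

section WeakHash

variable {U V : Type*} [DecidableEq U] [DecidableEq V] {𝒜 : Finset (U → V)}
  {p : (U → V) → ℝ}

lemma sum_filter_decode_ne_le_sum_collisions (hp0 : ∀ A, 0 ≤ p A) {x : U} {S : Finset U}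
    (d : (U → V) → U) (hd : ∀ A ∈ 𝒜, A (d A) = A x) (hdS : ∀ A ∈ 𝒜, d A ≠ x → d A ∈ S) :
    ∑ A ∈ 𝒜 with d A ≠ x, p A ≤ ∑ u' ∈ S, ∑ A ∈ 𝒜 with A x = A u', p A :=
  calc ∑ A ∈ 𝒜 with d A ≠ x, p A
      ≤ ∑ A ∈ 𝒜 with d A ≠ x, ∑ u' ∈ S with A x = A u', p A := by
        refine sum_le_sum fun A hA => ?_
        obtain ⟨hA, hne⟩ := mem_filter.1 hA
        exact single_le_sum (f := fun _ => p A) (fun _ _ => hp0 A)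
          (mem_filter.2 ⟨hdS A hA hne, (hd A hA).symm⟩)
    _ ≤ ∑ A ∈ 𝒜, ∑ u' ∈ S with A x = A u', p A :=
        sum_le_sum_of_subset_of_nonneg (filter_subset _ _) fun A _ _ =>
          sum_nonneg fun _ _ => hp0 A
    _ = ∑ u' ∈ S, ∑ A ∈ 𝒜 with A x = A u', p A :=
        sum_comm' fun A u' => by simp only [mem_filter]; tauto

lemma WeakHashIneq.sum_filter_decode_ne_le {α β M : ℝ} (hweak : WeakHashIneq 𝒜 p α β M)
    (hp0 : ∀ A, 0 ≤ p A) (hβ : 0 ≤ β) {x : U} {S : Finset U} (hxS : x ∉ S)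
    (d : (U → V) → U) (hd : ∀ A ∈ 𝒜, A (d A) = A x) (hdS : ∀ A ∈ 𝒜, d A ≠ x → d A ∈ S) :
    ∑ A ∈ 𝒜 with d A ≠ x, p A ≤ #S * α / M + β := by
  have key := hweak {x} S
  simp only [sum_singleton, card_singleton, singleton_inter_of_notMem hxS, card_empty,
    Nat.cast_zero, Nat.cast_one, one_mul, zero_add] at key
  have hmin : ((min 1 #S : ℕ) : ℝ) * β ≤ β :=
    mul_le_of_le_one_left hβ (by exact_mod_cast min_le_left _ _)
  linarith [sum_filter_decode_ne_le_sum_collisions hp0 d hd hdS]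

end WeakHash

lemma pos_and_one_div_mul_logb_one_div_le_iff {n h t : ℝ} (hn : 0 < n) :
    0 < t ∧ 1 / n * Real.logb 2 (1 / t) ≤ h ↔ (2 : ℝ) ^ (-(n * h)) ≤ t := by
  have key (ht : 0 < t) : 1 / n * Real.logb 2 (1 / t) ≤ h ↔ (2 : ℝ) ^ (-(n * h)) ≤ t := by
    rw [one_div_mul_eq_div, div_le_iff₀' hn, one_div, Real.logb_inv, neg_le,
      Real.le_logb_iff_rpow_le one_lt_two ht]
  exact ⟨fun ⟨ht, hle⟩ => (key ht).1 hle, fun hle =>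
    have ht := (Real.rpow_pos_of_pos two_pos _).trans_le hle
    ⟨ht, (key ht).2 hle⟩⟩

lemma two_rpow_neg_mul_sub {n M r h : ℝ} (hn : 0 < n) (hM : 0 < M)
    (hr : r = 1 / n * Real.logb 2 M) :
    (2 : ℝ) ^ (-(n * (r - h))) = 2 ^ (n * h) / M := by
  rw [hr, mul_sub, ← mul_assoc, mul_one_div_cancel hn.ne', one_mul, neg_sub,
    Real.rpow_sub two_pos, Real.rpow_logb two_pos (by norm_num) hM]

lemma card_filter_le_le_inv {ι : Type*} [Fintype ι] {f : ι → ℝ} (hf0 : ∀ i, 0 ≤ f i)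
    (hf1 : ∑ i, f i ≤ 1) {c : ℝ} (hc : 0 < c) :
    (#{i | c ≤ f i} : ℝ) ≤ c⁻¹ := by
  rw [← one_div, le_div_iff₀ hc]
  calc (#{i | c ≤ f i} : ℝ) * c ≤ ∑ i ∈ {i | c ≤ f i}, f i := by
        simpa using card_nsmul_le_sum _ f c fun i hi => (mem_filter.1 hi).2
    _ ≤ ∑ i, f i := sum_le_sum_of_subset_of_nonneg (subset_univ _) fun i _ _ => hf0 i
    _ ≤ 1 := hf1

lemma card_cond_ge_le_inv {U Y : Type*} [Fintype U] {μ : U × Y → ℝ} (hμ0 : ∀ q, 0 ≤ μ q)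
    (y : Y) {c : ℝ} (hc : 0 < c) :
    (#{x | c ≤ μ (x, y) / ∑ x' : U, μ (x', y)} : ℝ) ≤ c⁻¹ :=
  card_filter_le_le_inv (fun _ => div_nonneg (hμ0 _) (sum_nonneg fun _ _ => hμ0 _))
    ((sum_div _ _ _).symm.trans_le (div_self_le_one _)) hc

lemma sum_mul_sum_filter_comm {α β R : Type*} [CommSemiring R] (s : Finset α) (t : Finset β)
    (f : α → R) (g : β → R) (r : α → β → Prop) [∀ a b, Decidable (r a b)] :
    ∑ a ∈ s, f a * ∑ b ∈ t with r a b, g b = ∑ b ∈ t, g b * ∑ a ∈ s with r a b, f a := by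
  simp only [mul_sum, sum_filter, mul_ite, mul_zero]
  rw [sum_comm]
  simp only [mul_comm]

lemma sum_mul_le_add_sum_compl {ι : Type*} [Fintype ι] [DecidableEq ι] {μ e : ι → ℝ} {K : ℝ}
    (T : Finset ι) (hμ0 : ∀ i, 0 ≤ μ i) (hμ1 : ∑ i, μ i = 1) (he1 : ∀ i, e i ≤ 1)
    (heK : ∀ i ∈ T, e i ≤ K) (hK : 0 ≤ K) :
    ∑ i, μ i * e i ≤ K + ∑ i ∈ univ \ T, μ i := by
  have hT : ∑ i ∈ T, μ i * e i ≤ K :=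
    calc ∑ i ∈ T, μ i * e i ≤ ∑ i ∈ T, μ i * K :=
          sum_le_sum fun i hi => mul_le_mul_of_nonneg_left (heK i hi) (hμ0 i)
      _ = (∑ i ∈ T, μ i) * K := (sum_mul _ _ _).symm
      _ ≤ 1 * K := mul_le_mul_of_nonneg_right
          (hμ1 ▸ sum_le_sum_of_subset_of_nonneg (subset_univ _) fun i _ _ => hμ0 i) hK
      _ = K := one_mul K
  have hTc : ∑ i ∈ univ \ T, μ i * e i ≤ ∑ i ∈ univ \ T, μ i :=
    sum_le_sum fun i _ => mul_le_of_le_one_right (hμ0 i) (he1 i)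
  rw [← sum_sdiff (subset_univ T)]
  linarith

theorem stmt11_general {U Y V : Type*} [Fintype U] [DecidableEq U] [Fintype Y]
    [DecidableEq V]
    (𝒜 : Finset (U → V)) (p : (U → V) → ℝ)
    (hp0 : ∀ A, 0 ≤ p A) (hp1 : ∑ A ∈ 𝒜, p A = 1)
    (α β : ℝ) (hα : 0 ≤ α) (hβ : 0 ≤ β)
    (Im𝒜 : Finset V) (hIm : Im𝒜 = 𝒜.biUnion fun A => Finset.image A Finset.univ)
    (hweak : ∀ T T' : Finset U,
      ∑ u ∈ T, ∑ u' ∈ T', ∑ A ∈ 𝒜.filter (fun A => A u = A u'), p A ≤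
        ((T ∩ T').card : ℝ) + (T.card : ℝ) * (T'.card : ℝ) * α / (Im𝒜.card : ℝ)
          + ((min T.card T'.card : ℕ) : ℝ) * β)
    (μ : U × Y → ℝ) (hμ0 : ∀ q, 0 ≤ μ q) (hμ1 : ∑ q : U × Y, μ q = 1)
    (w : U → Y → ℝ) (hw : ∀ x y, w x y = μ (x, y) / (∑ x' : U, μ (x', y)))
    (g : (U → V) → V → Y → U)
    (hg : ∀ A ∈ 𝒜, ∀ (y : Y) (x : U),
      A (g A (A x) y) = A x ∧ w x y ≤ w (g A (A x) y) y)
    (n : ℕ) (hn : 1 ≤ n) (H ε r : ℝ)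
    (hr : r = (1 / (n : ℝ)) * Real.logb 2 ((Im𝒜.card : ℝ)))
    (T : Finset (U × Y))
    (hT : T = Finset.univ.filter fun q : U × Y =>
      0 < w q.1 q.2 ∧ (1 / (n : ℝ)) * Real.logb 2 (1 / w q.1 q.2) ≤ H + ε) :
    ∑ A ∈ 𝒜, p A * ∑ q ∈ Finset.univ.filter (fun q : U × Y => g A (A q.1) q.2 ≠ q.1), μ q ≤
      (2 : ℝ) ^ (-((n : ℝ) * (r - H - ε))) * α + β + ∑ q ∈ Finset.univ \ T, μ q := by
  have hn0 : (0 : ℝ) < n := by exact_mod_cast hn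
  obtain ⟨A₀, hA₀, -⟩ := exists_ne_zero_of_sum_ne_zero (hp1.trans_ne one_ne_zero)
  obtain ⟨⟨x₀, -⟩, -, -⟩ := exists_ne_zero_of_sum_ne_zero (hμ1.trans_ne one_ne_zero)
  have hM : (0 : ℝ) < #Im𝒜 := by
    rw [hIm]
    exact_mod_cast card_pos.2 ⟨A₀ x₀, mem_biUnion.2 ⟨A₀, hA₀, mem_image_of_mem _ (mem_univ _)⟩⟩
  set c : ℝ := 2 ^ (-(n * (H + ε))) with hc_def
  have hc : 0 < c := by positivity
  have hmemT : ∀ x y, (x, y) ∈ T ↔ c ≤ w x y := fun x y => by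
    rw [hT, mem_filter, and_iff_right (mem_univ _)]
    exact pos_and_one_div_mul_logb_one_div_le_iff hn0
  have hslice : ∀ y, (#{x | (x, y) ∈ T} : ℝ) ≤ c⁻¹ := fun y => by
    simpa only [hmemT, hw] using card_cond_ge_le_inv hμ0 y hc
  have hpair : ∀ q ∈ T, ∑ A ∈ 𝒜 with g A (A q.1) q.2 ≠ q.1, p A ≤
      (2 : ℝ) ^ (-((n : ℝ) * (r - H - ε))) * α + β := by
    rintro ⟨x, y⟩ hxy
    refine (WeakHashIneq.sum_filter_decode_ne_le hweak hp0 hβ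
      (notMem_erase x {x' | (x', y) ∈ T}) (fun A => g A (A x) y)
      (fun A hA => (hg A hA y x).1) fun A hA hne => ?_).trans ?_
    · exact mem_erase.2 ⟨hne, mem_filter.2 ⟨mem_univ _,
        (hmemT _ y).2 (((hmemT x y).1 hxy).trans (hg A hA y x).2)⟩⟩
    · have hcinv : c⁻¹ = 2 ^ (n * (H + ε)) := by
        rw [hc_def, Real.rpow_neg two_pos.le, inv_inv]
      rw [sub_sub, two_rpow_neg_mul_sub hn0 hM hr, ← hcinv, div_mul_eq_mul_div]
      gcongr
      exact (Nat.cast_le.2 card_erase_le).trans (hslice y)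
  rw [sum_mul_sum_filter_comm]
  exact sum_mul_le_add_sum_compl T hμ0 hμ1
    (fun q => (sum_le_sum_of_subset_of_nonneg (filter_subset _ _) fun A _ _ => hp0 A).trans
      hp1.le) hpair (by positivity)

/-- Expected maximum-likelihood decoding error bound for an ensemble satisfying the weak
hash inequality:
`E_A[P(x_A(AX|Y) ≠ X)] ≤ 2^{-n(r-H-ε)}·α + β + μ(T̄ᶜ)`, where `r = (1/n)log|ImA|` and
`T̄` is the conditionally typical set at level `H + ε`. -/
theorem stmt11 {U Y V : Type*} [Fintype U] [DecidableEq U] [Fintype Y] [Fintype V]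
    [DecidableEq V]
    (𝒜 : Finset (U → V)) (p : (U → V) → ℝ)
    (hp0 : ∀ A, 0 ≤ p A) (hp1 : ∑ A ∈ 𝒜, p A = 1)
    (α β : ℝ) (hα : 0 ≤ α) (hβ : 0 ≤ β)
    (Im𝒜 : Finset V) (hIm : Im𝒜 = 𝒜.biUnion fun A => Finset.image A Finset.univ)
    (hweak : ∀ T T' : Finset U,
      ∑ u ∈ T, ∑ u' ∈ T', ∑ A ∈ 𝒜.filter (fun A => A u = A u'), p A ≤
        ((T ∩ T').card : ℝ) + (T.card : ℝ) * (T'.card : ℝ) * α / (Im𝒜.card : ℝ)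
          + ((min T.card T'.card : ℕ) : ℝ) * β)
    (μ : U × Y → ℝ) (hμ0 : ∀ q, 0 ≤ μ q) (hμ1 : ∑ q : U × Y, μ q = 1)
    (w : U → Y → ℝ) (hw : ∀ x y, w x y = μ (x, y) / (∑ x' : U, μ (x', y)))
    (g : (U → V) → V → Y → U)
    (hg : ∀ A ∈ 𝒜, ∀ (y : Y) (x : U),
      A (g A (A x) y) = A x ∧ w x y ≤ w (g A (A x) y) y)
    (n : ℕ) (hn : 1 ≤ n) (H ε r : ℝ) (hH : 0 ≤ H) (hε : 0 < ε)
    (hr : r = (1 / (n : ℝ)) * Real.logb 2 ((Im𝒜.card : ℝ)))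
    (T : Finset (U × Y))
    (hT : T = Finset.univ.filter fun q : U × Y =>
      0 < w q.1 q.2 ∧ (1 / (n : ℝ)) * Real.logb 2 (1 / w q.1 q.2) ≤ H + ε) :
    ∑ A ∈ 𝒜, p A * ∑ q ∈ Finset.univ.filter (fun q : U × Y => g A (A q.1) q.2 ≠ q.1), μ q ≤
      (2 : ℝ) ^ (-((n : ℝ) * (r - H - ε))) * α + β + ∑ q ∈ Finset.univ \ T, μ q :=
  stmt11_general 𝒜 p hp0 hp1 α β hα hβ Im𝒜 hIm hweak μ hμ0 hμ1 w hw g hg n hn H ε r hr T hT
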